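/- Under the conditions of Theorem 2, P(⋃{H : H closed half-space with P(H) ≤ s}) = O(s) as s ↓ 0. -/

import Mathlib

/-!
Along each unit direction `v`, regular variation compares the tail `P(⟪v, X⟫ ≥ t)` with
`P(‖X‖ ≥ t) ≍ t ^ (-α)`, the ratio tending to `ν {1 ≤ ⟪v, x⟫} ≥ m > 0`; the limit applies because
the hyperplane bounding that half-space is `ν`-null by homogeneity. A finite net of the sphere
makes the bound `P(⟪u, X⟫ ≥ a) ≥ κ a ^ (-α)` uniform in `u`, since moving the direction by
`1 / K` only loses mass outside the ball of radius `K a`, which is negligible for `K` large.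
Hence a half-space of mass at most `s` sits beyond distance `T ≍ s ^ (-1 / α)` from the origin,
and the union of all of them has mass at most `P(‖X‖ > T) ≍ T ^ (-α) ≍ s`.
-/

open MeasureTheory Filter Set Topology
open scoped RealInnerProductSpace Pointwise ENNReal

section RealFunctions

variable {ι : Type*} {l : Filter ι} {f g : ι → ℝ} {L a : ℝ}

lemma eventually_mul_lt_of_tendsto_div (h : Tendsto (fun t => f t / g t) l (𝓝 L))
    (hg : ∀ᶠ t in l, 0 < g t) (ha : a < L) : ∀ᶠ t in l, a * g t < f t := by
  filter_upwards [h.eventually (lt_mem_nhds ha), hg] with t ht hgt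
  exact (lt_div_iff₀ hgt).1 ht

lemma eventually_lt_mul_of_tendsto_div (h : Tendsto (fun t => f t / g t) l (𝓝 L))
    (hg : ∀ᶠ t in l, 0 < g t) (ha : L < a) : ∀ᶠ t in l, f t < a * g t := by
  filter_upwards [h.eventually (gt_mem_nhds ha), hg] with t ht hgt
  exact (div_lt_iff₀ hgt).1 ht

end RealFunctions

lemma lt_of_lt_mul_rpow_of_antitone {f : ℝ → ℝ} (hf : Antitone f) {α κ a₀ T a : ℝ}
    (hα : 0 ≤ α) (hκ : 0 ≤ κ) (ha₀ : 0 < a₀) (hbound : ∀ b, a₀ ≤ b → κ * b ^ (-α) ≤ f b)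
    (hT : a₀ ≤ T) (h : f a < κ * T ^ (-α)) : T < a := by
  by_contra! haT
  have hb : 0 < max a a₀ := ha₀.trans_le (le_max_right _ _)
  have : κ * T ^ (-α) ≤ f a := calc
    κ * T ^ (-α) ≤ κ * max a a₀ ^ (-α) :=
      mul_le_mul_of_nonneg_left (Real.rpow_le_rpow_of_nonpos hb (max_le haT hT) (by linarith)) hκ
    _ ≤ f (max a a₀) := hbound _ (le_max_right _ _)
    _ ≤ f a := hf (le_max_left _ _)
  linarith

section InnerProduct

variable {E : Type*} [NormedAddCommGroup E] [InnerProductSpace ℝ E]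

lemma exists_pos_le_norm_of_one_le_inner (v : E) :
    ∃ ε > 0, ∀ x ∈ {x : E | 1 ≤ ⟪v, x⟫}, ε ≤ ‖x‖ := by
  refine ⟨(‖v‖ + 1)⁻¹, by positivity, fun x (hx : 1 ≤ ⟪v, x⟫) => ?_⟩
  rw [inv_le_iff_one_le_mul₀' (by positivity)]
  nlinarith [real_inner_le_norm v x, norm_nonneg x]

lemma smul_setOf_one_le_inner {t : ℝ} (ht : 0 < t) (v : E) :
    t • {x : E | 1 ≤ ⟪v, x⟫} = {x | t ≤ ⟪v, x⟫} := by
  ext x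
  simp only [mem_smul_set_iff_inv_smul_mem₀ ht.ne', mem_ofPred_eq, real_inner_smul_right,
    le_inv_mul_iff₀ ht, mul_one]

lemma smul_setOf_inner_eq_one {t : ℝ} (ht : t ≠ 0) (v : E) :
    t • {x : E | ⟪v, x⟫ = 1} = {x | ⟪v, x⟫ = t} := by
  ext x
  simp only [mem_smul_set_iff_inv_smul_mem₀ ht, mem_ofPred_eq, real_inner_smul_right,
    inv_mul_eq_one₀ ht, eq_comm]

lemma setOf_add_le_inner_subset (u v : E) (a b : ℝ) :
    {x : E | a + b ≤ ⟪v, x⟫} ⊆ {x | a ≤ ⟪u, x⟫} ∪ {x | b < ‖v - u‖ * ‖x‖} := by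
  intro x (hx : a + b ≤ ⟪v, x⟫)
  by_contra! h
  simp only [mem_union, mem_ofPred_eq, not_or, not_le, not_lt] at h
  have := real_inner_le_norm (v - u) x
  rw [inner_sub_left] at this
  linarith [h.1, h.2]

end InnerProduct

section Homogeneous

variable {E : Type*} [NormedAddCommGroup E] [InnerProductSpace ℝ E] [MeasurableSpace E]

def IsHomogeneousAwayFromZero (ν : Measure E) (α : ℝ) : Prop :=
  ∀ a : ℝ, 0 < a → ∀ B : Set E, MeasurableSet B → (∃ ε > 0, ∀ x ∈ B, ε ≤ ‖x‖) →
    ν (a • B) = ENNReal.ofReal (a ^ (-α)) * ν B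

variable [BorelSpace E]

/-- The hyperplanes `⟪v, x⟫ = r`, `r > 1`, are disjoint scaled copies of the one at level `1`;
if that one had positive mass, uncountably many disjoint sets of positive mass would fit into
the half-space `1 ≤ ⟪v, x⟫` of finite mass. -/
lemma measure_setOf_inner_eq_one_eq_zero {ν : Measure E} {α : ℝ}
    (hν : IsHomogeneousAwayFromZero ν α) {v : E} (hfin : ν {x | 1 ≤ ⟪v, x⟫} ≠ ∞) :
    ν {x | ⟪v, x⟫ = 1} = 0 := by
  by_contra hne
  have hmeas : ∀ r : ℝ, MeasurableSet {x : E | ⟪v, x⟫ = r} := fun r =>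
    measurableSet_eq_fun (by fun_prop) measurable_const
  have hbdd : ∃ ε > 0, ∀ x ∈ {x : E | ⟪v, x⟫ = 1}, ε ≤ ‖x‖ :=
    (exists_pos_le_norm_of_one_le_inner v).imp fun _ ⟨hε, h⟩ => ⟨hε, fun x hx => h x hx.ge⟩
  have hpos : ∀ r : Ioi (1 : ℝ), 0 < ν {x | ⟪v, x⟫ = r} := by
    intro r
    have hr : (0 : ℝ) < r := one_pos.trans r.2
    rw [← smul_setOf_inner_eq_one hr.ne', hν r hr _ (hmeas 1) hbdd]
    exact ENNReal.mul_pos (ENNReal.ofReal_pos.2 (Real.rpow_pos_of_pos hr _)).ne' hne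
  have hcount := Measure.countable_meas_pos_of_disjoint_of_meas_iUnion_ne_top ν
    (As := fun r : Ioi (1 : ℝ) => {x : E | ⟪v, x⟫ = r}) (fun r => hmeas r)
    (fun r s hrs => disjoint_left.2 fun x hr hs => hrs (Subtype.ext (hr.symm.trans hs)))
    (ne_top_of_le_ne_top hfin (measure_mono (iUnion_subset fun r x hx => r.2.le.trans hx.ge)))
  simp only [hpos, ofPred_true, countable_univ_iff, countable_coe_iff] at hcount
  simpa using hcount.measure_zero volume

lemma measure_frontier_setOf_one_le_inner_eq_zero {ν : Measure E} {α : ℝ}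
    (hν : IsHomogeneousAwayFromZero ν α) {v : E} (hfin : ν {x | 1 ≤ ⟪v, x⟫} ≠ ∞) :
    ν (frontier {x | 1 ≤ ⟪v, x⟫}) = 0 :=
  measure_mono_null (fun _ hx => (frontier_le_subset_eq continuous_const (by fun_prop) hx).symm)
    (measure_setOf_inner_eq_one_eq_zero hν hfin)

lemma tendsto_map_measureReal_inner_div {Ω : Type*} [MeasurableSpace Ω] {μ : Measure Ω}
    {X : Ω → E} (hX : Measurable X) {v : E} {L : ℝ}
    (h : Tendsto (fun t : ℝ => (μ {ω | X ω ∈ t • {x | 1 ≤ ⟪v, x⟫}}).toReal /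
      (μ {ω | t ≤ ‖X ω‖}).toReal) atTop (𝓝 L)) :
    Tendsto (fun t : ℝ => (μ.map X).real {x | t ≤ ⟪v, x⟫} / (μ.map X).real {x | t ≤ ‖x‖})
      atTop (𝓝 L) := by
  refine h.congr' ?_
  filter_upwards [eventually_gt_atTop 0] with t ht
  rw [smul_setOf_one_le_inner ht, map_measureReal_apply hX (measurableSet_le (by fun_prop)
    (by fun_prop)), map_measureReal_apply hX (measurableSet_le (by fun_prop) (by fun_prop))]
  rfl

end Homogeneous

section Tails

variable {E : Type*} [NormedAddCommGroup E] [InnerProductSpace ℝ E] [MeasurableSpace E]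

lemma sUnion_small_halfspaces_subset (P : Measure E) {s T : ℝ}
    (h : ∀ u : E, ‖u‖ = 1 → ∀ a : ℝ, P {x | a ≤ ⟪u, x⟫} ≤ ENNReal.ofReal s → T < a) :
    ⋃₀ {H : Set E | (∃ (u : E) (a : ℝ), ‖u‖ = 1 ∧ H = {x | a ≤ ⟪u, x⟫})
      ∧ P H ≤ ENNReal.ofReal s} ⊆ {x | T < ‖x‖} := by
  rintro x ⟨_, ⟨⟨u, a, hu, rfl⟩, hs⟩, hx : a ≤ ⟪u, x⟫⟩
  have hux := real_inner_le_norm u x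
  rw [hu, one_mul] at hux
  exact (h u hu a hs).trans_le (hx.trans hux)

variable (P : Measure E) [IsFiniteMeasure P]

lemma eventually_mul_rpow_le_measureReal_inner {α κ L ℓ : ℝ} {v : E}
    (hlow : ∀ᶠ t in atTop, κ * t ^ (-α) < P.real {x | t < ‖x‖}) (hκ : 0 < κ)
    (hratio : Tendsto (fun t => P.real {x | t ≤ ⟪v, x⟫} / P.real {x | t ≤ ‖x‖}) atTop (𝓝 L))
    (hℓ : 0 ≤ ℓ) (hℓL : ℓ < L) :
    ∀ᶠ t in atTop, ℓ * κ * t ^ (-α) ≤ P.real {x | t ≤ ⟪v, x⟫} := by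
  have hnorm : ∀ᶠ t in atTop, κ * t ^ (-α) < P.real {x | t ≤ ‖x‖} :=
    (hlow.and (eventually_gt_atTop 0)).mono fun t ⟨h, _⟩ =>
      h.trans_le (measureReal_mono fun x (hx : t < ‖x‖) => hx.le)
  have hpos : ∀ᶠ t in atTop, 0 < P.real {x | t ≤ ‖x‖} :=
    (hnorm.and (eventually_gt_atTop 0)).mono fun t ⟨h, ht⟩ =>
      lt_trans (by have := Real.rpow_pos_of_pos ht (-α); positivity) h
  filter_upwards [hnorm, eventually_mul_lt_of_tendsto_div hratio hpos hℓL] with t h1 h2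
  rw [mul_assoc]
  exact (mul_le_mul_of_nonneg_left h1.le hℓ).trans h2.le

lemma exists_forall_mul_rpow_le_measureReal_inner [ProperSpace E] {α κ C : ℝ} (hα : 0 < α)
    (hκ : 0 < κ)
    (hdir : ∀ v : E, ‖v‖ = 1 → ∀ᶠ t in atTop, κ * t ^ (-α) ≤ P.real {x | t ≤ ⟪v, x⟫})
    (hup : ∀ᶠ t in atTop, P.real {x | t < ‖x‖} < C * t ^ (-α)) :
    ∃ κ' > 0, ∀ᶠ a in atTop, ∀ u : E, ‖u‖ = 1 → κ' * a ^ (-α) ≤ P.real {x | a ≤ ⟪u, x⟫} := by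
  set κ' := κ * 2 ^ (-α) / 2 with hκ'_def
  have hκ' : 0 < κ' := by positivity
  obtain ⟨K, hCK, hK⟩ : ∃ K, C * K ^ (-α) ≤ κ' ∧ 0 < K :=
    ((((tendsto_rpow_neg_atTop hα).const_mul C).eventually
      (ge_mem_nhds (by simpa using hκ'))).and (eventually_gt_atTop 0)).exists
  obtain ⟨F, hFS, hF, hcover⟩ :=
    finite_cover_balls_of_compact (isCompact_sphere (0 : E) 1) (inv_pos.2 hK)
  have hdirF : ∀ᶠ t in atTop, ∀ v ∈ F, κ * t ^ (-α) ≤ P.real {x | t ≤ ⟪v, x⟫} :=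
    hF.eventually_all.2 fun v hv => hdir v (mem_sphere_zero_iff_norm.1 (hFS hv))
  refine ⟨κ', hκ', ?_⟩
  filter_upwards [(tendsto_id.const_mul_atTop two_pos).eventually hdirF,
    (tendsto_id.const_mul_atTop hK).eventually hup, eventually_gt_atTop 0] with a hdira hupa ha u hu
  obtain ⟨v, hvF, huv⟩ : ∃ v ∈ F, u ∈ Metric.ball v K⁻¹ := by
    simpa using hcover (mem_sphere_zero_iff_norm.2 hu)
  have hsub : {x : E | 2 * a ≤ ⟪v, x⟫} ⊆ {x | a ≤ ⟪u, x⟫} ∪ {x | K * a < ‖x‖} := by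
    rw [two_mul]
    refine (setOf_add_le_inner_subset u v a a).trans
      (union_subset_union_right _ fun x (hx : a < ‖v - u‖ * ‖x‖) => ?_)
    have hvu : ‖v - u‖ ≤ K⁻¹ := by
      rw [norm_sub_rev, ← dist_eq_norm]
      exact (Metric.mem_ball.1 huv).le
    exact (lt_inv_mul_iff₀ hK).1 (hx.trans_le (mul_le_mul_of_nonneg_right hvu (norm_nonneg x)))
  have hsplit := (measureReal_mono hsub (μ := P)).trans (measureReal_union_le _ _)
  have h2a := hdira v hvF
  simp only [id] at h2a hupa
  have hpow : 0 < a ^ (-α) := Real.rpow_pos_of_pos ha _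
  rw [Real.mul_rpow two_pos.le ha.le] at h2a
  rw [Real.mul_rpow hK.le ha.le] at hupa
  have hκ2 : κ * (2 ^ (-α) * a ^ (-α)) = 2 * (κ' * a ^ (-α)) := by rw [hκ'_def]; ring
  nlinarith [mul_le_mul_of_nonneg_right hCK hpow.le]

lemma exists_measure_sUnion_small_halfspaces_le {α κ C : ℝ} (hα : 0 < α) (hκ : 0 < κ)
    (hC : 0 < C)
    (hunif : ∀ᶠ a in atTop, ∀ u : E, ‖u‖ = 1 → κ * a ^ (-α) ≤ P.real {x | a ≤ ⟪u, x⟫})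
    (hup : ∀ᶠ t in atTop, P.real {x | t < ‖x‖} < C * t ^ (-α)) :
    ∃ C' > 0, ∀ᶠ s in 𝓝[>] 0,
      P (⋃₀ {H : Set E | (∃ (u : E) (a : ℝ), ‖u‖ = 1 ∧ H = {x | a ≤ ⟪u, x⟫})
        ∧ P H ≤ ENNReal.ofReal s}) ≤ ENNReal.ofReal (C' * s) := by
  obtain ⟨a₀, ha₀⟩ := eventually_atTop.1 (hunif.and (eventually_gt_atTop 0))
  obtain ⟨t₁, ht₁⟩ := eventually_atTop.1 hup
  set M := max a₀ t₁
  have hM : 0 < M := (ha₀ a₀ le_rfl).2.trans_le (le_max_left _ _)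
  refine ⟨2 * C / κ, by positivity, ?_⟩
  filter_upwards [Ioo_mem_nhdsGT (show 0 < κ / 2 * M ^ (-α) by positivity)] with s ⟨hs, hsM⟩
  -- the level `T` at which the lower bound `κ * T ^ (-α)` on half-spaces equals `2 * s`
  set T := (2 * s / κ) ^ (-α)⁻¹
  have hT : T ^ (-α) = 2 * s / κ := Real.rpow_inv_rpow (by positivity) (neg_ne_zero.2 hα.ne')
  have hTpos : 0 < T := by positivity
  have hMT : M ≤ T := by
    rw [← Real.rpow_le_rpow_iff_of_neg hTpos hM (neg_lt_zero.2 hα), hT, div_le_iff₀ hκ]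
    linarith
  have hfar : ∀ u : E, ‖u‖ = 1 → ∀ a, P {x | a ≤ ⟪u, x⟫} ≤ ENNReal.ofReal s → T < a := by
    intro u hu a ha
    refine lt_of_lt_mul_rpow_of_antitone (f := fun b => P.real {x | b ≤ ⟪u, x⟫})
      (fun b b' hbb' => measureReal_mono fun x (hx : b' ≤ ⟪u, x⟫) => hbb'.trans hx) hα.le hκ.le
      (ha₀ a₀ le_rfl).2 (fun b hb => (ha₀ b hb).1 u hu) ((le_max_left _ _).trans hMT) ?_
    rw [hT, mul_div_cancel₀ _ hκ.ne']
    exact (ENNReal.toReal_le_of_le_ofReal hs.le ha).trans_lt (by linarith)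
  calc _ ≤ P {x | T < ‖x‖} := measure_mono (sUnion_small_halfspaces_subset P hfar)
    _ = ENNReal.ofReal (P.real {x | T < ‖x‖}) := (ENNReal.ofReal_toReal (measure_ne_top P _)).symm
    _ ≤ ENNReal.ofReal (2 * C / κ * s) := by
      refine ENNReal.ofReal_le_ofReal ((ht₁ T ((le_max_right _ _).trans hMT)).le.trans_eq ?_)
      rw [hT]
      ring

end Tails

theorem union_small_halfspaces_O_general {d : ℕ} {Ω : Type*} [MeasurableSpace Ω]
    (μ : Measure Ω) [IsProbabilityMeasure μ]
    (X : Ω → EuclideanSpace ℝ (Fin d)) (hX : Measurable X)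
    (α c : ℝ) (hα : 0 < α) (hc : 0 < c) (ν : Measure (EuclideanSpace ℝ (Fin d)))
    (hom : ∀ a : ℝ, 0 < a → ∀ B : Set (EuclideanSpace ℝ (Fin d)), MeasurableSet B →
      (∃ ε > 0, ∀ x ∈ B, ε ≤ ‖x‖) → ν (a • B) = ENNReal.ofReal (a ^ (-α)) * ν B)
    (hconv : ∀ B : Set (EuclideanSpace ℝ (Fin d)), MeasurableSet B →
      (∃ ε > 0, ∀ x ∈ B, ε ≤ ‖x‖) → ν (frontier B) = 0 → ν B ≠ ⊤ →
      Tendsto (fun t : ℝ =>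
          (μ {ω | X ω ∈ t • B}).toReal / (μ {ω | t ≤ ‖X ω‖}).toReal)
        atTop (nhds (ν B).toReal))
    (hnorm : Tendsto (fun t : ℝ => (μ {ω | t < ‖X ω‖}).toReal / t ^ (-α))
      atTop (nhds c))
    (hfin : ∀ u : EuclideanSpace ℝ (Fin d), ‖u‖ = 1 → ν {x | 1 ≤ ⟪u, x⟫} ≠ ⊤)
    (hpos : ∃ m > 0, ∀ u : EuclideanSpace ℝ (Fin d), ‖u‖ = 1 →
      ENNReal.ofReal m ≤ ν {x | 1 ≤ ⟪u, x⟫}) :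
    ∃ C > 0, ∀ᶠ s : ℝ in nhdsWithin 0 (Set.Ioi 0),
      Measure.map X μ (⋃₀ {H : Set (EuclideanSpace ℝ (Fin d)) |
          (∃ (u : EuclideanSpace ℝ (Fin d)) (a : ℝ), ‖u‖ = 1 ∧ H = {x | a ≤ ⟪u, x⟫})
          ∧ Measure.map X μ H ≤ ENNReal.ofReal s})
        ≤ ENNReal.ofReal (C * s) := by
  obtain ⟨m, hm, hmν⟩ := hpos
  set P := μ.map X
  have htail : Tendsto (fun t => P.real {x | t < ‖x‖} / t ^ (-α)) atTop (𝓝 c) := by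
    refine hnorm.congr fun t => ?_
    rw [map_measureReal_apply hX (measurableSet_lt measurable_const measurable_norm)]
    rfl
  have hpow : ∀ᶠ t : ℝ in atTop, 0 < t ^ (-α) :=
    (eventually_gt_atTop 0).mono fun t ht => Real.rpow_pos_of_pos ht _
  have hup := eventually_lt_mul_of_tendsto_div htail hpow (lt_two_mul_self hc)
  have hdir : ∀ v, ‖v‖ = 1 →
      ∀ᶠ t in atTop, m / 2 * (c / 2) * t ^ (-α) ≤ P.real {x | t ≤ ⟪v, x⟫} := by
    intro v hv
    have hratio := tendsto_map_measureReal_inner_div hX (hconv _ (measurableSet_le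
      measurable_const (by fun_prop)) (exists_pos_le_norm_of_one_le_inner v)
      (measure_frontier_setOf_one_le_inner_eq_zero hom (hfin v hv)) (hfin v hv))
    refine eventually_mul_rpow_le_measureReal_inner P
      (eventually_mul_lt_of_tendsto_div htail hpow (half_lt_self hc)) (half_pos hc) hratio
      (half_pos hm).le ((half_lt_self hm).trans_le ?_)
    exact (ENNReal.ofReal_le_iff_le_toReal (hfin v hv)).1 (hmν v hv)
  obtain ⟨κ, hκ, hunif⟩ :=
    exists_forall_mul_rpow_le_measureReal_inner P hα (by positivity) hdir hup
  exact exists_measure_sUnion_small_halfspaces_le P hα hκ (by positivity) hunif hup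

/-- Under the conditions of Theorem 2, the probability of the union of all closed
half-spaces of probability at most `s` is `O(s)` as `s ↓ 0`. -/
theorem union_small_halfspaces_O {d : ℕ} {Ω : Type*} [MeasurableSpace Ω]
    (μ : Measure Ω) [IsProbabilityMeasure μ]
    (X : Ω → EuclideanSpace ℝ (Fin d)) (hX : Measurable X)
    (α c : ℝ) (hα : 0 < α) (hc : 0 < c) (ν : Measure (EuclideanSpace ℝ (Fin d)))
    (hom : ∀ a : ℝ, 0 < a → ∀ B : Set (EuclideanSpace ℝ (Fin d)), MeasurableSet B →
      (∃ ε > 0, ∀ x ∈ B, ε ≤ ‖x‖) → ν (a • B) = ENNReal.ofReal (a ^ (-α)) * ν B)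
    (hconv : ∀ B : Set (EuclideanSpace ℝ (Fin d)), MeasurableSet B →
      (∃ ε > 0, ∀ x ∈ B, ε ≤ ‖x‖) → ν (frontier B) = 0 → ν B ≠ ⊤ →
      Tendsto (fun t : ℝ =>
          (μ {ω | X ω ∈ t • B}).toReal / (μ {ω | t ≤ ‖X ω‖}).toReal)
        atTop (nhds (ν B).toReal))
    (hnorm : Tendsto (fun t : ℝ => (μ {ω | t < ‖X ω‖}).toReal / t ^ (-α))
      atTop (nhds c))
    (hcont : ∀ u : EuclideanSpace ℝ (Fin d), ‖u‖ = 1 →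
      Continuous (fun w : ℝ => (μ {ω | ⟪u, X ω⟫ ≤ w}).toReal))
    (hfin : ∀ u : EuclideanSpace ℝ (Fin d), ‖u‖ = 1 → ν {x | 1 ≤ ⟪u, x⟫} ≠ ⊤)
    (hpos : ∃ m > 0, ∀ u : EuclideanSpace ℝ (Fin d), ‖u‖ = 1 →
      ENNReal.ofReal m ≤ ν {x | 1 ≤ ⟪u, x⟫}) :
    ∃ C > 0, ∀ᶠ s : ℝ in nhdsWithin 0 (Set.Ioi 0),
      Measure.map X μ (⋃₀ {H : Set (EuclideanSpace ℝ (Fin d)) |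
          (∃ (u : EuclideanSpace ℝ (Fin d)) (a : ℝ), ‖u‖ = 1 ∧ H = {x | a ≤ ⟪u, x⟫})
          ∧ Measure.map X μ H ≤ ENNReal.ofReal s})
        ≤ ENNReal.ofReal (C * s) :=
  union_small_halfspaces_O_general μ X hX α c hα hc ν hom hconv hnorm hfin hpos
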